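/- arXiv:1507.01738 — 8 statements merged into one kernel-verified Lean document; each statement's English description precedes it below -/
import Mathlib

section
/- Let m and n be positive real numbers with m ≠ n. Then θ = π/4 is the unique θ ∈ (0, π/2) satisfying m + n = m·(cot θ)² + n·(tan θ)² together with −m·cot θ + n·tan θ ≠ 0. (That is, in type III-B₁ with m(α) ≠ n(α) there is exactly one proper biharmonic regular orbit, at the center of the cell.) -/
open Real

theorem stmt_3 (m n : ℝ) (hm : 0 < m) (hn : 0 < n) (hmn : m ≠ n) :
    ∀ θ ∈ Set.Ioo 0 (π / 2),
      (m + n = m * (Real.cot θ) ^ 2 + n * (Real.tan θ) ^ 2 ∧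
        -m * Real.cot θ + n * Real.tan θ ≠ 0) ↔ θ = π / 4 := by
  intro θ hθ
  obtain ⟨h0, h1⟩ := hθ
  have hs : 0 < Real.sin θ := Real.sin_pos_of_pos_of_lt_pi h0 (by linarith [Real.pi_pos])
  have hc : 0 < Real.cos θ := Real.cos_pos_of_mem_Ioo ⟨by linarith [Real.pi_pos], h1⟩
  have htan : Real.tan θ = Real.sin θ / Real.cos θ := Real.tan_eq_sin_div_cos θ
  have hcot : Real.cot θ = Real.cos θ / Real.sin θ := Real.cot_eq_cos_div_sin θ
  constructor
  · rintro ⟨heq, hne⟩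
    rw [htan, hcot] at heq hne
    have hs' := hs.ne'
    have hc' := hc.ne'
    have key : (Real.cos θ ^ 2 - Real.sin θ ^ 2) *
        (m * Real.cos θ ^ 2 - n * Real.sin θ ^ 2) = 0 := by
      field_simp at heq
      nlinarith [heq]
    have hne2 : m * Real.cos θ ^ 2 - n * Real.sin θ ^ 2 ≠ 0 := by
      intro h
      apply hne
      field_simp
      nlinarith [h]
    have hcs : Real.cos θ ^ 2 = Real.sin θ ^ 2 := by
      rcases mul_eq_zero.mp key with h | h
      · linarith
      · exact absurd h hne2
    have hcs' : Real.cos θ = Real.sin θ := by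
      nlinarith [hcs, hs, hc]
    have htan1 : Real.tan θ = 1 := by rw [htan, hcs']; field_simp
    have hmem1 : θ ∈ Set.Ioo (-(π / 2)) (π / 2) := ⟨by linarith [Real.pi_pos], h1⟩
    have hmem2 : π / 4 ∈ Set.Ioo (-(π / 2)) (π / 2) :=
      ⟨by linarith [Real.pi_pos], by linarith [Real.pi_pos]⟩
    exact Real.injOn_tan hmem1 hmem2 (by rw [htan1, Real.tan_pi_div_four])
  · rintro rfl
    have ht : Real.tan (π / 4) = 1 := Real.tan_pi_div_four
    have hct : Real.cot (π / 4) = 1 := by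
      rw [hcot, Real.cos_pi_div_four, Real.sin_pi_div_four]
      have : (Real.sqrt 2) ≠ 0 := by positivity
      field_simp
    rw [ht, hct]
    constructor
    · ring
    · intro h
      apply hmn
      linarith
end

section
/- Let m₁, m₂, n₁ be positive real numbers and set D = m₁ + n₁ + 6m₂. Then D² − 4(n₁ + m₂)(m₁ + m₂) > 0, and for every θ ∈ (0, π/2) the equation m₁ + n₁ + 4m₂ = m₁·(cot θ)² + n₁·(tan θ)² + 4m₂·(cot 2θ)² holds if and only if (tan θ)² = (D + √(D² − 4(n₁+m₂)(m₁+m₂)))/(2(n₁+m₂)) or (tan θ)² = (D − √(D² − 4(n₁+m₂)(m₁+m₂)))/(2(n₁+m₂)). -/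
/-!
Put `x = tan² θ`. Since `cot θ = 1 / tan θ` and `cot 2θ = (1 - tan² θ) / (2 tan θ)`, multiplying the
equation by `x ≠ 0` turns it into the quadratic `(n₁ + m₂) x² - D x + (m₁ + m₂) = 0`, whose
discriminant `(m₁ - n₁)² + 8 m₂ (m₁ + n₁) + 32 m₂²` is positive; the quadratic formula finishes.
-/

open Real

namespace Real

theorem cot_eq_inv_tan (x : ℝ) : cot x = (tan x)⁻¹ :=
  inv_eq_iff_eq_inv.mp (cot_inv_eq_tan x)

theorem cot_two_mul_sq (x : ℝ) : cot (2 * x) ^ 2 = (1 - tan x ^ 2) ^ 2 / (4 * tan x ^ 2) := by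
  rw [cot_eq_inv_tan, tan_two_mul, inv_div, div_pow, mul_pow]
  norm_num

end Real

theorem biharmonic_tan_sq_iff_quadratic (m₁ m₂ n₁ : ℝ) {x : ℝ} (hx : x ≠ 0) :
    m₁ + n₁ + 4 * m₂ = m₁ * x⁻¹ + n₁ * x + 4 * m₂ * ((1 - x) ^ 2 / (4 * x)) ↔
      (n₁ + m₂) * (x * x) + -(m₁ + n₁ + 6 * m₂) * x + (m₁ + m₂) = 0 := by
  constructor <;> intro h
  · field_simp at h
    linear_combination -h
  · field_simp
    linear_combination -h

theorem biharmonic_discriminant_pos (m₁ m₂ n₁ : ℝ) (hm₁ : 0 < m₁) (hm₂ : 0 < m₂) (hn₁ : 0 < n₁) :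
    0 < (m₁ + n₁ + 6 * m₂) ^ 2 - 4 * (n₁ + m₂) * (m₁ + m₂) := by
  nlinarith [sq_nonneg (m₁ - n₁), mul_pos hm₂ hm₁, mul_pos hm₂ hn₁, mul_pos hm₂ hm₂]

theorem stmt_4 (m₁ m₂ n₁ : ℝ) (hm₁ : 0 < m₁) (hm₂ : 0 < m₂) (hn₁ : 0 < n₁)
    (D : ℝ) (hD : D = m₁ + n₁ + 6 * m₂) :
    D ^ 2 - 4 * (n₁ + m₂) * (m₁ + m₂) > 0 ∧
    ∀ θ ∈ Set.Ioo 0 (π / 2),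
      (m₁ + n₁ + 4 * m₂ =
          m₁ * (Real.cot θ) ^ 2 + n₁ * (Real.tan θ) ^ 2 +
            4 * m₂ * (Real.cot (2 * θ)) ^ 2 ↔
        (Real.tan θ) ^ 2 =
            (D + Real.sqrt (D ^ 2 - 4 * (n₁ + m₂) * (m₁ + m₂))) / (2 * (n₁ + m₂)) ∨
          (Real.tan θ) ^ 2 =
            (D - Real.sqrt (D ^ 2 - 4 * (n₁ + m₂) * (m₁ + m₂))) / (2 * (n₁ + m₂))) := by
  subst hD
  have hΔ := biharmonic_discriminant_pos m₁ m₂ n₁ hm₁ hm₂ hn₁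
  refine ⟨hΔ, fun θ ⟨hθ₀, hθ₁⟩ => ?_⟩
  have htan : tan θ ^ 2 ≠ 0 := (pow_pos (tan_pos_of_pos_of_lt_pi_div_two hθ₀ hθ₁) 2).ne'
  have hdiscrim : discrim (n₁ + m₂) (-(m₁ + n₁ + 6 * m₂)) (m₁ + m₂) =
      √((m₁ + n₁ + 6 * m₂) ^ 2 - 4 * (n₁ + m₂) * (m₁ + m₂)) *
        √((m₁ + n₁ + 6 * m₂) ^ 2 - 4 * (n₁ + m₂) * (m₁ + m₂)) := by
    rw [mul_self_sqrt hΔ.le, discrim, neg_sq]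
  rw [cot_two_mul_sq, cot_eq_inv_tan, inv_pow, biharmonic_tan_sq_iff_quadratic m₁ m₂ n₁ htan,
    quadratic_eq_zero_iff (by positivity) hdiscrim, neg_neg]
end

section
/- Let m₁, m₂, n₁ be positive real numbers, set D = m₁ + n₁ + 6m₂, a = m₁ + m₂, b = n₁ + m₂, and Δ = √(D² − 4ab). Then 0 < (D − Δ)/(2b) < a/b < (D + Δ)/(2b). (Consequently, in type I-BC₁ there are exactly two proper biharmonic regular orbits, and the unique harmonic regular orbit lies strictly between them.) -/
open Real

theorem stmt_6 (m₁ m₂ n₁ : ℝ) (hm₁ : 0 < m₁) (hm₂ : 0 < m₂) (hn₁ : 0 < n₁)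
    (D a b Δ : ℝ) (hD : D = m₁ + n₁ + 6 * m₂) (ha : a = m₁ + m₂)
    (hb : b = n₁ + m₂) (hΔ : Δ = Real.sqrt (D ^ 2 - 4 * a * b)) :
    0 < (D - Δ) / (2 * b) ∧ (D - Δ) / (2 * b) < a / b ∧ a / b < (D + Δ) / (2 * b) := by
  have hbpos : 0 < b := by rw [hb]; linarith
  have hapos : 0 < a := by rw [ha]; linarith
  have hDpos : 0 < D := by rw [hD]; linarith
  have hdisc : 0 ≤ D ^ 2 - 4 * a * b := by
    subst hD ha hb; nlinarith [sq_nonneg (m₁ - n₁), sq_nonneg m₂]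
  have hΔ0 : 0 ≤ Δ := hΔ ▸ Real.sqrt_nonneg _
  have hΔsq : Δ ^ 2 = D ^ 2 - 4 * a * b := by
    rw [hΔ, sq_sqrt hdisc]
  have hDab : D - a - b = 4 * m₂ := by subst hD ha hb; ring
  have hΔltD : Δ < D := by nlinarith [mul_pos hapos hbpos]
  have habs : |D - 2 * a| < Δ := by
    rw [abs_lt]
    constructor <;> nlinarith [mul_pos hapos hm₂]
  rw [abs_lt] at habs
  refine ⟨div_pos (by linarith) (by linarith), ?_, ?_⟩
  · rw [div_lt_div_iff₀ (by linarith) hbpos]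
    nlinarith
  · rw [div_lt_div_iff₀ hbpos (by linarith)]
    nlinarith
end

section
/- Let m₁ and n₂ be positive real numbers with n₂ ≥ 4m₁, and let θ ∈ (0, π/2). Then the equation 2m₁ + 4n₂ = m₁·((cot(θ/2))² + (tan(θ/2))²) + 4n₂·(tan θ)² holds if and only if (tan θ)² = (n₂ + √(n₂² − 4n₂m₁))/(2n₂) or (tan θ)² = (n₂ − √(n₂² − 4n₂m₁))/(2n₂). -/
/-! Writing `T = tan² θ`, the double-angle formulas give `cot²(θ/2) + tan²(θ/2) = 4 / T + 2`, so
the equation becomes the quadratic `n₂ T² - n₂ T + m₁ = 0`, whose discriminant `n₂² - 4 n₂ m₁` is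
nonnegative because `n₂ ≥ 4 m₁`; the two roots are the stated values. -/

open Real

theorem Real.cot_half_sq_add_tan_half_sq {x : ℝ} (hx : sin x ≠ 0) :
    cot (x / 2) ^ 2 + tan (x / 2) ^ 2 = 4 / tan x ^ 2 + 2 := by
  have hsin : sin x = 2 * sin (x / 2) * cos (x / 2) := by
    rw [← sin_two_mul, mul_div_cancel₀ x two_ne_zero]
  have hcos : cos x = cos (x / 2) ^ 2 - sin (x / 2) ^ 2 := by
    rw [← cos_two_mul', mul_div_cancel₀ x two_ne_zero]
  have hs : sin (x / 2) ≠ 0 := by rintro h; simp [hsin, h] at hx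
  have hc : cos (x / 2) ≠ 0 := by rintro h; simp [hsin, h] at hx
  -- `4 / (a / b) = 4 * b / a` holds even when `cos x = 0`, where `tan x = 0`
  rw [tan_eq_sin_div_cos x, div_pow (sin x), div_div_eq_mul_div, cot_eq_cos_div_sin,
    tan_eq_sin_div_cos, hsin, hcos]
  field_simp
  ring

theorem eq_iff_quadratic_of_ne_zero {m n T : ℝ} (hT : T ≠ 0) :
    2 * m + 4 * n = m * (4 / T + 2) + 4 * n * T ↔ n * (T * T) + -n * T + m = 0 := by
  constructor
  · intro h
    field_simp at h
    linear_combination (-1 / 4 : ℝ) * h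
  · intro h
    field_simp
    linear_combination (-4 : ℝ) * h

theorem stmt_7_general (m₁ n₂ θ : ℝ) (hn₂ : 0 < n₂) (h : n₂ ≥ 4 * m₁)
    (hθ : θ ∈ Set.Ioo 0 (π / 2)) :
    2 * m₁ + 4 * n₂ =
        m₁ * ((Real.cot (θ / 2)) ^ 2 + (Real.tan (θ / 2)) ^ 2) +
          4 * n₂ * (Real.tan θ) ^ 2 ↔
      (Real.tan θ) ^ 2 = (n₂ + Real.sqrt (n₂ ^ 2 - 4 * n₂ * m₁)) / (2 * n₂) ∨
        (Real.tan θ) ^ 2 = (n₂ - Real.sqrt (n₂ ^ 2 - 4 * n₂ * m₁)) / (2 * n₂) := by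
  obtain ⟨hθ₀, hθ₁⟩ := hθ
  have hsin : sin θ ≠ 0 := (sin_pos_of_pos_of_lt_pi hθ₀ (by linarith [pi_pos])).ne'
  have htan : tan θ ^ 2 ≠ 0 := (pow_pos (tan_pos_of_pos_of_lt_pi_div_two hθ₀ hθ₁) 2).ne'
  have hdiscrim : discrim n₂ (-n₂) m₁ =
      √(n₂ ^ 2 - 4 * n₂ * m₁) * √(n₂ ^ 2 - 4 * n₂ * m₁) := by
    rw [mul_self_sqrt (by nlinarith), discrim]
    ring
  rw [cot_half_sq_add_tan_half_sq hsin, eq_iff_quadratic_of_ne_zero htan,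
    quadratic_eq_zero_iff hn₂.ne' hdiscrim, neg_neg]

theorem stmt_7 (m₁ n₂ θ : ℝ) (hm₁ : 0 < m₁) (hn₂ : 0 < n₂) (h : n₂ ≥ 4 * m₁)
    (hθ : θ ∈ Set.Ioo 0 (π / 2)) :
    2 * m₁ + 4 * n₂ =
        m₁ * ((Real.cot (θ / 2)) ^ 2 + (Real.tan (θ / 2)) ^ 2) +
          4 * n₂ * (Real.tan θ) ^ 2 ↔
      (Real.tan θ) ^ 2 = (n₂ + Real.sqrt (n₂ ^ 2 - 4 * n₂ * m₁)) / (2 * n₂) ∨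
        (Real.tan θ) ^ 2 = (n₂ - Real.sqrt (n₂ ^ 2 - 4 * n₂ * m₁)) / (2 * n₂) :=
  stmt_7_general m₁ n₂ θ hn₂ h hθ
end

section
/- Let m₁ and n₂ be positive real numbers with n₂ < 4m₁. Then there is no θ ∈ (0, π/2) satisfying 2m₁ + 4n₂ = m₁·((cot(θ/2))² + (tan(θ/2))²) + 4n₂·(tan θ)². (Consequently, in type II-BC₁ with n₂ < 4m₁, every biharmonic regular orbit is harmonic.) -/
open Real

/-! The half-angle identity `cot (θ/2) ^ 2 + tan (θ/2) ^ 2 = 2 + 4 cot θ ^ 2` turns the equation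
into `m₁ = n₂ · t (1 - t)` with `t = tan θ ^ 2`, and `t (1 - t) ≤ 1/4` contradicts `n₂ < 4 m₁`. -/

namespace Real

lemma cot_mul_tan {x : ℝ} (hs : sin x ≠ 0) (hc : cos x ≠ 0) : cot x * tan x = 1 := by
  rw [cot_eq_cos_div_sin, tan_eq_sin_div_cos]
  field_simp

lemma cot_half_sub_tan_half (x : ℝ) : cot (x / 2) - tan (x / 2) = 2 * cot x := by
  have hx : x = 2 * (x / 2) := by ring
  rw [hx, cot_eq_cos_div_sin, cot_eq_cos_div_sin, tan_eq_sin_div_cos, sin_two_mul, cos_two_mul,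
    ← hx, ← sin_sq_add_cos_sq (x / 2)]
  rcases eq_or_ne (sin (x / 2)) 0 with hs | hs
  · simp [hs]
  rcases eq_or_ne (cos (x / 2)) 0 with hc | hc
  · simp [hc]
  field_simp
  ring

lemma cot_half_sq_add_tan_half_sq_s9 {x : ℝ} (hx : sin x ≠ 0) :
    cot (x / 2) ^ 2 + tan (x / 2) ^ 2 = 2 + 4 * cot x ^ 2 := by
  have hx' : sin (2 * (x / 2)) ≠ 0 := by rwa [mul_div_cancel₀ x two_ne_zero]
  rw [sin_two_mul] at hx'
  have hs : sin (x / 2) ≠ 0 := right_ne_zero_of_mul (left_ne_zero_of_mul hx')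
  have hc : cos (x / 2) ≠ 0 := right_ne_zero_of_mul hx'
  have hprod := cot_mul_tan hs hc
  linear_combination (cot_half_sub_tan_half x) * (cot (x / 2) - tan (x / 2) + 2 * cot x)
    + 2 * hprod

end Real

theorem stmt_9_general (m₁ n₂ : ℝ) (hn₂ : 0 < n₂) (h : n₂ < 4 * m₁) :
    ¬ ∃ θ ∈ Set.Ioo 0 (π / 2),
      2 * m₁ + 4 * n₂ =
        m₁ * ((Real.cot (θ / 2)) ^ 2 + (Real.tan (θ / 2)) ^ 2) +
          4 * n₂ * (Real.tan θ) ^ 2 := by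
  rintro ⟨θ, ⟨hθ₀, hθ⟩, heq⟩
  have hs : sin θ ≠ 0 := (sin_pos_of_pos_of_lt_pi hθ₀ (by linarith [pi_pos])).ne'
  have hc : cos θ ≠ 0 := (cos_pos_of_mem_Ioo ⟨by linarith [pi_pos], hθ⟩).ne'
  rw [cot_half_sq_add_tan_half_sq_s9 hs] at heq
  have hprod := cot_mul_tan hs hc
  set t := tan θ ^ 2
  have hm : m₁ = n₂ * (t * (1 - t)) := by
    linear_combination (-t / 4) * heq - m₁ * (1 + cot θ * tan θ) * hprod
  have hquarter : t * (1 - t) ≤ 1 / 4 := by nlinarith [sq_nonneg (t - 1 / 2)]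
  linarith [mul_le_mul_of_nonneg_left hquarter hn₂.le]

theorem stmt_9 (m₁ n₂ : ℝ) (hm₁ : 0 < m₁) (hn₂ : 0 < n₂) (h : n₂ < 4 * m₁) :
    ¬ ∃ θ ∈ Set.Ioo 0 (π / 2),
      2 * m₁ + 4 * n₂ =
        m₁ * ((Real.cot (θ / 2)) ^ 2 + (Real.tan (θ / 2)) ^ 2) +
          4 * n₂ * (Real.tan θ) ^ 2 :=
  stmt_9_general m₁ n₂ hn₂ h
end

section
/- Let m₁, m₂, n₂ be positive real numbers with (m₂ − n₂)² < 4n₂m₁. Then there is no θ ∈ (0, π/2) satisfying 2m₁ + 4m₂ + 4n₂ = m₁·((cot(θ/2))² + (tan(θ/2))²) + 4m₂·(cot θ)² + 4n₂·(tan θ)². (Consequently, in type III-BC₁ with (m₂ − n₂)² < 4n₂m₁, every biharmonic regular orbit is harmonic.) -/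
open Real

theorem stmt_14 (m₁ m₂ n₂ : ℝ) (hm₁ : 0 < m₁) (hm₂ : 0 < m₂) (hn₂ : 0 < n₂)
    (h : (m₂ - n₂) ^ 2 < 4 * n₂ * m₁) :
    ¬ ∃ θ ∈ Set.Ioo 0 (π / 2),
      2 * m₁ + 4 * m₂ + 4 * n₂ =
        m₁ * ((Real.cot (θ / 2)) ^ 2 + (Real.tan (θ / 2)) ^ 2) +
          4 * m₂ * (Real.cot θ) ^ 2 + 4 * n₂ * (Real.tan θ) ^ 2 := by
  rintro ⟨θ, ⟨hθ0, hθπ⟩, heq⟩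
  have hπ := Real.pi_pos
  have hs : 0 < Real.sin θ := Real.sin_pos_of_pos_of_lt_pi hθ0 (by linarith)
  have hc : 0 < Real.cos θ := Real.cos_pos_of_mem_Ioo ⟨by linarith, hθπ⟩
  have hs2 : 0 < Real.sin (θ / 2) := Real.sin_pos_of_pos_of_lt_pi (by linarith) (by linarith)
  have hc2 : 0 < Real.cos (θ / 2) := Real.cos_pos_of_mem_Ioo ⟨by linarith, by linarith⟩
  have hpy : Real.sin θ ^ 2 = 1 - Real.cos θ ^ 2 := by
    have := Real.sin_sq_add_cos_sq θ; linarith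
  have hb2 : Real.cos (θ / 2) ^ 2 = (1 + Real.cos θ) / 2 := by
    have := Real.cos_two_mul (θ / 2)
    rw [show 2 * (θ / 2) = θ by ring] at this
    linarith
  have ha2 : Real.sin (θ / 2) ^ 2 = (1 - Real.cos θ) / 2 := by
    have := Real.sin_sq_add_cos_sq (θ / 2); linarith
  have hclt : Real.cos θ < 1 := by nlinarith
  rw [Real.cot_eq_cos_div_sin, Real.cot_eq_cos_div_sin, Real.tan_eq_sin_div_cos,
    Real.tan_eq_sin_div_cos, div_pow, div_pow, div_pow, div_pow, ha2, hb2, hpy] at heq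
  set c := Real.cos θ with hcdef
  have h1 : (0:ℝ) < 1 - c := by linarith
  have h2 : (0:ℝ) < 1 + c := by linarith
  have h3 : (1:ℝ) - c ^ 2 ≠ 0 := by nlinarith
  field_simp at heq
  have key : (2 * m₁ + 4 * m₂ + 4 * n₂) * (1 - c ^ 2) * c ^ 2 =
      m₁ * (2 + 2 * c ^ 2) * c ^ 2 + 4 * m₂ * c ^ 4 + 4 * n₂ * (1 - c ^ 2) ^ 2 :=
    mul_left_cancel₀ h3 (by linear_combination heq)
  nlinarith [sq_nonneg (2 * (m₁ + 2 * m₂ + 2 * n₂) * c ^ 2 - (m₂ + 3 * n₂)), h,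
    mul_pos hm₁ hn₂, mul_pos hm₂ hn₂, sq_nonneg c]
end

section
/- Let m₁, m₂, n₂ be positive real numbers with (m₂ − n₂)² > 4n₂m₁. Then (m₁ + m₂)/n₂ ≠ (m₂ + n₂ + √((m₂ − n₂)² − 4n₂m₁))/(2n₂) and (m₁ + m₂)/n₂ ≠ (m₂ + n₂ − √((m₂ − n₂)² − 4n₂m₁))/(2n₂). -/
theorem stmt_16 (m₁ m₂ n₂ : ℝ) (hm₁ : 0 < m₁) (hm₂ : 0 < m₂) (hn₂ : 0 < n₂)
    (h : (m₂ - n₂) ^ 2 > 4 * n₂ * m₁) :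
    (m₁ + m₂) / n₂ ≠ (m₂ + n₂ + Real.sqrt ((m₂ - n₂) ^ 2 - 4 * n₂ * m₁)) / (2 * n₂) ∧
    (m₁ + m₂) / n₂ ≠ (m₂ + n₂ - Real.sqrt ((m₂ - n₂) ^ 2 - 4 * n₂ * m₁)) / (2 * n₂) := by
  have hs : Real.sqrt ((m₂ - n₂) ^ 2 - 4 * n₂ * m₁) ^ 2 = (m₂ - n₂) ^ 2 - 4 * n₂ * m₁ :=
    Real.sq_sqrt (by linarith)
  constructor <;> intro heq <;> rw [div_eq_div_iff hn₂.ne' (by positivity)] at heq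
  · have h1 : Real.sqrt ((m₂ - n₂) ^ 2 - 4 * n₂ * m₁) * n₂ = (2 * m₁ + m₂ - n₂) * n₂ := by
      linear_combination -heq
    have h2 := mul_right_cancel₀ hn₂.ne' h1
    nlinarith [mul_pos hm₁ (show (0:ℝ) < m₁ + m₂ by linarith)]
  · have h1 : Real.sqrt ((m₂ - n₂) ^ 2 - 4 * n₂ * m₁) * n₂ = -(2 * m₁ + m₂ - n₂) * n₂ := by
      linear_combination heq
    have h2 := mul_right_cancel₀ hn₂.ne' h1
    nlinarith [mul_pos hm₁ (show (0:ℝ) < m₁ + m₂ by linarith)]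
end

section
/- For every θ ∈ (0, π/2), the equation 9 = 2·(cot θ)² + 7·(cot 2θ)² holds if and only if (cot θ)² = (25 + 2√130)/15 or (cot θ)² = (25 − 2√130)/15. -/
/-!
Writing `c = cot θ`, the double-angle formula gives `cot 2θ = (c² - 1) / (2c)`, so clearing the
denominator `4c²` turns the equation into the quadratic `15 x² - 50 x + 7 = 0` in `x = c²`, whose
discriminant is `2080 = (4√130)²`. With Lean's convention `y / 0 = 0` the double-angle formula
holds for every real argument, and when `c = 0` both sides of the reduction are false.
-/

open Real

theorem Real.cot_two_mul (x : ℝ) : cot (2 * x) = (cot x ^ 2 - 1) / (2 * cot x) := by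
  rw [cot_eq_cos_div_sin, cot_eq_cos_div_sin, sin_two_mul, cos_two_mul]
  rcases eq_or_ne (sin x) 0 with hs | hs
  · simp [hs]
  rcases eq_or_ne (cos x) 0 with hc | hc
  · simp [hc]
  field_simp
  linear_combination sin_sq_add_cos_sq x

theorem nine_eq_iff_quadratic (c : ℝ) :
    (9 : ℝ) = 2 * c ^ 2 + 7 * ((c ^ 2 - 1) / (2 * c)) ^ 2 ↔
      15 * (c ^ 2) ^ 2 - 50 * c ^ 2 + 7 = 0 := by
  rcases eq_or_ne c 0 with rfl | hc
  · norm_num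
  field_simp
  constructor <;> intro h <;> linear_combination -h

theorem quadratic_iff_eq_roots (x : ℝ) :
    15 * x ^ 2 - 50 * x + 7 = 0 ↔
      x = (25 + 2 * √130) / 15 ∨ x = (25 - 2 * √130) / 15 := by
  have hdiscrim : discrim 15 (-50) 7 = (4 * √130) * (4 * √130 : ℝ) := by
    rw [discrim, mul_mul_mul_comm, Real.mul_self_sqrt (by norm_num)]
    norm_num
  rw [show 15 * x ^ 2 - 50 * x + 7 = 15 * (x * x) + -50 * x + 7 by ring,
    quadratic_eq_zero_iff (by norm_num) hdiscrim]
  ring_nf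

theorem stmt_17 :
    ∀ θ ∈ Set.Ioo 0 (π / 2),
      (9 : ℝ) = 2 * (Real.cot θ) ^ 2 + 7 * (Real.cot (2 * θ)) ^ 2 ↔
        (Real.cot θ) ^ 2 = (25 + 2 * Real.sqrt 130) / 15 ∨
          (Real.cot θ) ^ 2 = (25 - 2 * Real.sqrt 130) / 15 := by
  intro θ _
  rw [Real.cot_two_mul, nine_eq_iff_quadratic, quadratic_iff_eq_roots]
end
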